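/- At every point z of U, the homogeneity identity ∑_{j=1}^n z_j (∂L/∂z_j)(z) = 2k·L(z) + (|a|^{2k+1}/(2k)!)·Q(z) holds, where Q(z) = (1/|a|^{2k+1}) ∑_{1 ≤ i_1 < ... < i_{k+1} ≤ n} (∏_{m=1}^{k+1} a_{i_m}/d_{i_1,...,\hat{i_m},...,i_{k+1}}^2) · f_{i_1,...,i_{k+1}}(z)^{2k}. -/

import Mathlib

/-! Each summand of `L` has the form `c · ℓ^{2k} · log ℓ` with `ℓ` a linear form. Along the Euler
field `z ↦ z`, `ℓ^{2k}` has derivative `2k ℓ^{2k}`, and `log ℓ` has derivative `ℓ / exp (log ℓ) = 1`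
(differentiate `exp ∘ log ℓ = ℓ`). So the Euler derivative of the summand is
`2k · c ℓ^{2k} log ℓ + c ℓ^{2k}`, and the second terms add up to `|a|^{2k+1} Q`. -/

noncomputable section

/-- The determinant `d_{l 1, …, l k}` of the `k × k` matrix whose `m`-th column consists of
`b (l m) 1, …, b (l m) k`. -/
def dd {n k : ℕ} (b : Fin n → Fin k → ℂ) (l : Fin k → Fin n) : ℂ :=
  Matrix.det (Matrix.of fun j m => b (l m) j)

/-- `f_{i_1,…,i_{k+1}}(z) = ∑_{l=1}^{k+1} (-1)^{l-1} d_{i_1,…,î_l,…,i_{k+1}} z_{i_l}`. -/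
def fF {n k : ℕ} (b : Fin n → Fin k → ℂ) (z : Fin n → ℂ) (I : Fin (k + 1) → Fin n) : ℂ :=
  ∑ l : Fin (k + 1), (-1) ^ (l : ℕ) * dd b (I ∘ l.succAbove) * z (I l)

/-- The discriminant `Δ ⊂ ℂⁿ`, the union over `1 ≤ i_1 < … < i_{k+1} ≤ n` of the zero sets of
the `f_{i_1,…,i_{k+1}}`. -/
def discr {n k : ℕ} (b : Fin n → Fin k → ℂ) : Set (Fin n → ℂ) :=
  {z | ∃ I : Fin (k + 1) → Fin n, StrictMono I ∧ fF b z I = 0}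

/-- The potential
`L(z) = (1/(2k)!) ∑_{1 ≤ i_1 < … < i_{k+1} ≤ n}
  (∏_{m=1}^{k+1} a_{i_m}/d_{i_1,…,î_m,…,i_{k+1}}²) f_{i_1,…,i_{k+1}}(z)^{2k}
  log f_{i_1,…,i_{k+1}}(z)`,
where `lg s` is the chosen holomorphic branch of `log f_{i_1,…,i_{k+1}}` attached to the
`(k+1)`-element subset `s = {i_1 < … < i_{k+1}}`. -/
def Lfun {n k : ℕ} (a : Fin n → ℂ) (b : Fin n → Fin k → ℂ)
    (lg : {s : Finset (Fin n) // s.card = k + 1} → (Fin n → ℂ) → ℂ)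
    (z : Fin n → ℂ) : ℂ :=
  (((2 * k).factorial : ℂ))⁻¹ *
    ∑ s : {s : Finset (Fin n) // s.card = k + 1},
      (∏ m : Fin (k + 1),
        a (s.1.orderEmbOfFin s.2 m) / (dd b (⇑(s.1.orderEmbOfFin s.2) ∘ m.succAbove)) ^ 2) *
      (fF b z ⇑(s.1.orderEmbOfFin s.2)) ^ (2 * k) * lg s z

/-- The polynomial function
`Q(z) = (1/|a|^{2k+1}) ∑_{1 ≤ i_1 < … < i_{k+1} ≤ n}
  (∏_{m=1}^{k+1} a_{i_m}/d_{i_1,…,î_m,…,i_{k+1}}²) f_{i_1,…,i_{k+1}}(z)^{2k}` on `ℂⁿ`. -/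
def Qfun {n k : ℕ} (a : Fin n → ℂ) (b : Fin n → Fin k → ℂ) (z : Fin n → ℂ) : ℂ :=
  ((∑ i, a i) ^ (2 * k + 1))⁻¹ *
    ∑ s : {s : Finset (Fin n) // s.card = k + 1},
      (∏ m : Fin (k + 1),
        a (s.1.orderEmbOfFin s.2 m) / (dd b (⇑(s.1.orderEmbOfFin s.2) ∘ m.succAbove)) ^ 2) *
      (fF b z ⇑(s.1.orderEmbOfFin s.2)) ^ (2 * k)

open Filter Topology

section EulerIdentity

variable {E : Type*} [NormedAddCommGroup E] [NormedSpace ℂ E]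

theorem ContinuousLinearMap.sum_mul_apply_single {R ι : Type*} [CommSemiring R]
    [TopologicalSpace R] [Fintype ι] [DecidableEq ι] (φ : (ι → R) →L[R] R) (z : ι → R) : ∑ j, z j * φ (Pi.single j 1) = φ z := by
  conv_rhs => rw [← Finset.univ_sum_single z]
  simp only [map_sum]
  refine Finset.sum_congr rfl fun j _ => ?_
  rw [← smul_eq_mul, ← map_smul, ← Pi.single_smul, smul_eq_mul, mul_one]

theorem fderiv_apply_self_eq_one_of_cexp_eq {ℓ : E →L[ℂ] ℂ} {g : E → ℂ} {z : E}
    (hg : DifferentiableAt ℂ g z) (hexp : ∀ᶠ w in 𝓝 z, Complex.exp (g w) = ℓ w) :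
    fderiv ℂ g z z = 1 := by
  have hderiv : Complex.exp (g z) • fderiv ℂ g z = ℓ :=
    hg.hasFDerivAt.cexp.unique (ℓ.hasFDerivAt.congr_of_eventuallyEq hexp)
  have hz := congrArg (fun T : E →L[ℂ] ℂ => T z) hderiv
  simp only [smul_apply, smul_eq_mul, ← hexp.self_of_nhds] at hz
  exact (mul_eq_left₀ (Complex.exp_ne_zero _)).mp hz

theorem fderiv_pow_mul_apply_self_of_cexp_eq {ℓ : E →L[ℂ] ℂ} {g : E → ℂ} {z : E}
    (hg : DifferentiableAt ℂ g z) (hexp : ∀ᶠ w in 𝓝 z, Complex.exp (g w) = ℓ w) (m : ℕ) :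
    fderiv ℂ (fun w => ℓ w ^ m * g w) z z = ℓ z ^ m * (m * g z + 1) := by
  rw [fderiv_fun_mul (by fun_prop) hg, fderiv_fun_pow m ℓ.differentiableAt]
  simp only [add_apply, smul_apply,
    ContinuousLinearMap.fderiv, smul_eq_mul, nsmul_eq_mul,
    fderiv_apply_self_eq_one_of_cexp_eq hg hexp]
  rcases m with _ | m
  · simp
  · push_cast
    ring

theorem fderiv_sum_pow_mul_apply_self_of_cexp_eq {ι : Type*} (t : Finset ι) (c : ι → ℂ)
    {ℓ : ι → E →L[ℂ] ℂ} {g : ι → E → ℂ} {z : E} (hg : ∀ i, DifferentiableAt ℂ (g i) z)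
    (hexp : ∀ i, ∀ᶠ w in 𝓝 z, Complex.exp (g i w) = ℓ i w) (m : ℕ) :
    fderiv ℂ (fun w => ∑ i ∈ t, c i * ℓ i w ^ m * g i w) z z =
      m * ∑ i ∈ t, c i * ℓ i z ^ m * g i z + ∑ i ∈ t, c i * ℓ i z ^ m := by
  have hdiff : ∀ i, DifferentiableAt ℂ (fun w => ℓ i w ^ m * g i w) z := fun i =>
    ((ℓ i).differentiableAt.pow m).mul (hg i)
  have hterm : ∀ i, fderiv ℂ (fun w => c i * (ℓ i w ^ m * g i w)) z z =
      c i * (ℓ i z ^ m * (m * g i z + 1)) := fun i => by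
    rw [fderiv_const_mul (hdiff i), smul_apply, smul_eq_mul,
      fderiv_pow_mul_apply_self_of_cexp_eq (hg i) (hexp i)]
  simp only [mul_assoc (c _)]
  rw [fderiv_fun_sum fun i _ => (hdiff i).const_mul (c i), sum_apply]
  simp only [hterm, Finset.mul_sum, ← Finset.sum_add_distrib]
  exact Finset.sum_congr rfl fun i _ => by ring

end EulerIdentity

def fFL {n k : ℕ} (b : Fin n → Fin k → ℂ) (I : Fin (k + 1) → Fin n) : (Fin n → ℂ) →L[ℂ] ℂ :=
  ∑ l : Fin (k + 1), ((-1) ^ (l : ℕ) * dd b (I ∘ l.succAbove)) • ContinuousLinearMap.proj (I l)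

@[simp]
theorem fFL_apply {n k : ℕ} (b : Fin n → Fin k → ℂ) (I : Fin (k + 1) → Fin n) (z : Fin n → ℂ) :
    fFL b I z = fF b z I := by
  simp [fFL, fF]

theorem stmt15_general (n k : ℕ) (b : Fin n → Fin k → ℂ)
    (a : Fin n → ℂ) (hsum : ∑ i, a i ≠ 0)
    (U : Set (Fin n → ℂ)) (hUopen : IsOpen U)
    (lg : {s : Finset (Fin n) // s.card = k + 1} → (Fin n → ℂ) → ℂ)
    (hlghol : ∀ s, DifferentiableOn ℂ (lg s) U)
    (hlg : ∀ s, ∀ z ∈ U, Complex.exp (lg s z) = fF b z ⇑(s.1.orderEmbOfFin s.2)) :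
    ∀ z ∈ U,
      ∑ j : Fin n, z j * fderiv ℂ (Lfun a b lg) z (Pi.single j 1)
        = 2 * k * Lfun a b lg z +
            (∑ i, a i) ^ (2 * k + 1) / ((2 * k).factorial : ℂ) * Qfun a b z := by
  intro z hz
  have hlgz : ∀ s, DifferentiableAt ℂ (lg s) z := fun s =>
    (hlghol s).differentiableAt (hUopen.mem_nhds hz)
  have hexp : ∀ s, ∀ᶠ w in 𝓝 z, Complex.exp (lg s w) = fFL b ⇑(s.1.orderEmbOfFin s.2) w :=
    fun s => eventually_of_mem (hUopen.mem_nhds hz) fun w hw => by rw [fFL_apply, hlg s w hw]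
  have hL : Lfun a b lg = fun w => ((2 * k).factorial : ℂ)⁻¹ *
      ∑ s ∈ (Finset.univ : Finset {s : Finset (Fin n) // s.card = k + 1}),
      (∏ m : Fin (k + 1), a (s.1.orderEmbOfFin s.2 m) /
        (dd b (⇑(s.1.orderEmbOfFin s.2) ∘ m.succAbove)) ^ 2) *
      fFL b ⇑(s.1.orderEmbOfFin s.2) w ^ (2 * k) * lg s w := by
    funext w
    simp only [fFL_apply]
    rfl
  rw [ContinuousLinearMap.sum_mul_apply_single, hL, fderiv_const_mul (by fun_prop),
    smul_apply, smul_eq_mul,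
    fderiv_sum_pow_mul_apply_self_of_cexp_eq _ _ hlgz hexp]
  simp only [Qfun, fFL_apply]
  field_simp
  push_cast
  ring

/-- Fix `n > k ≥ 1`, numbers `b_i^j` with all determinants `d_{i_1,…,i_k}` (distinct indices)
nonzero, and weights `a_i ∈ ℂ^×` with `|a| = ∑ a_i ≠ 0`.  Let `U ⊆ ℂⁿ − Δ` be a connected
simply connected open set on which holomorphic branches `lg s` of `log f_{i_1,…,i_{k+1}}` are
chosen, and let `L` be the potential.  Then at every `z ∈ U` the homogeneity identity
`∑_{j=1}^n z_j (∂L/∂z_j)(z) = 2k L(z) + (|a|^{2k+1}/(2k)!) Q(z)` holds. -/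
theorem stmt15 (n k : ℕ) (hk : 1 ≤ k) (hnk : k < n) (b : Fin n → Fin k → ℂ)
    (hd : ∀ l : Fin k → Fin n, Function.Injective l → dd b l ≠ 0)
    (a : Fin n → ℂ) (ha : ∀ i, a i ≠ 0) (hsum : ∑ i, a i ≠ 0)
    (U : Set (Fin n → ℂ)) (hUopen : IsOpen U) (hUconn : IsConnected U)
    (hUsc : SimplyConnectedSpace ↥U) (hUD : U ⊆ (discr b)ᶜ)
    (lg : {s : Finset (Fin n) // s.card = k + 1} → (Fin n → ℂ) → ℂ)
    (hlghol : ∀ s, DifferentiableOn ℂ (lg s) U)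
    (hlg : ∀ s, ∀ z ∈ U, Complex.exp (lg s z) = fF b z ⇑(s.1.orderEmbOfFin s.2)) :
    ∀ z ∈ U,
      ∑ j : Fin n, z j * fderiv ℂ (Lfun a b lg) z (Pi.single j 1)
        = 2 * k * Lfun a b lg z +
            (∑ i, a i) ^ (2 * k + 1) / ((2 * k).factorial : ℂ) * Qfun a b z :=
  stmt15_general n k b a hsum U hUopen lg hlghol hlg
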